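/- arXiv:1909.12817 — 2 statements merged into one kernel-verified Lean document; each statement's English description precedes it below -/
import Mathlib

section
/- A connected d-regular graph (d ≥ 3) of girth g in which every non-backtracking walk of length ⌊g/2⌋ + 1 extends to a closed geodesic of length g is a Moore graph, i.e., it attains the Moore bound: n = 1 + d·∑_{j=0}^{(g-3)/2}(d-1)^j if g is odd, and n = 2·∑_{j=0}^{(g-2)/2}(d-1)^j if g is even. -/
open SimpleGraph List Finset

/-- The list of darts of a walk is non-backtracking. -/
def SimpleGraph.Walk.NonBacktracking {V : Type*} {G : SimpleGraph V} {u v : V}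
    (w : G.Walk u v) : Prop :=
  w.darts.Chain' (fun d₁ d₂ => d₂ ≠ d₁.symm)

/-- A closed geodesic: a nonempty closed walk that is non-backtracking,
including at the basepoint. -/
def SimpleGraph.Walk.IsClosedGeodesic {V : Type*} {G : SimpleGraph V} {v : V}
    (w : G.Walk v v) : Prop :=
  w.darts ≠ [] ∧ w.darts.Chain' (fun d₁ d₂ => d₂ ≠ d₁.symm) ∧
    ∀ df ∈ w.darts.head?, ∀ dl ∈ w.darts.getLast?, df ≠ dl.symm

/-- A walk is contained in a closed geodesic of length `g` if its dart sequence
is a (cyclic) subwalk of that of some closed geodesic of length `g`. -/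
def ContainedInClosedGeodesic {V : Type*} (G : SimpleGraph V) {a b : V}
    (w : G.Walk a b) (g : ℕ) : Prop :=
  ∃ (v : V) (c : G.Walk v v), c.IsClosedGeodesic ∧ c.length = g ∧
    w.darts <:+: c.darts ++ c.darts

/-!
Fix a vertex `v` and put `R = ⌊g/2⌋`. If a non-backtracking walk `w` of length `R + 1` lies on a
closed geodesic of length `g`, the rest of that geodesic joins the endpoints of `w` by a walk of
length `g - R - 1 ≤ R`. Applied to shortest paths out of `v`, this shows that no vertex is at
distance `R + 1` from `v`, so all vertices lie in the spheres `S_0, …, S_R` around `v`.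

Non-backtracking walks whose total length is below the girth are determined by their endpoints, so
up to radius `< g/2` the spheres grow as in the `d`-regular tree: `|S_{j+1}| = d (d-1)^j`. For odd
`g` this already counts every vertex. For even `g`, the same argument applied to a shortest path
followed by an edge inside `S_R` shows that `S_R` spans no edges, so each vertex of `S_R` has all
its `d` neighbours in `S_{R-1}`, and double counting the edges between the two spheres gives
`|S_R| = (d-1)^(R-1)`.
-/

lemma one_add_succ_mul_geom_sum_add_pow (e m : ℕ) :
    1 + (e + 1) * ∑ j ∈ range m, e ^ j + e ^ m = 2 * ∑ j ∈ range (m + 1), e ^ j := by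
  rw [add_mul, one_mul, Finset.mul_sum, two_mul]
  nth_rw 1 [Finset.sum_range_succ']
  rw [Finset.sum_range_succ]
  simp only [pow_succ, pow_zero, mul_comm e]
  ring

namespace SimpleGraph

variable {V : Type*} {G : SimpleGraph V}

namespace Walk

lemma nonBacktracking_iff_isChain {u v : V} (p : G.Walk u v) :
    p.NonBacktracking ↔ p.darts.IsChain (fun d₁ d₂ => d₂ ≠ d₁.symm) :=
  Iff.rfl

lemma nonBacktracking_cons_iff {u w v : V} (h : G.Adj u w) (p : G.Walk w v) :
    (cons h p).NonBacktracking ↔ p.NonBacktracking ∧ (¬p.Nil → p.snd ≠ u) := by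
  cases p with
  | nil => simp [nonBacktracking_iff_isChain]
  | cons h' p =>
    simp [nonBacktracking_iff_isChain, List.isChain_cons_cons, Dart.ext_iff, and_comm]

lemma NonBacktracking.reverse {u v : V} {p : G.Walk u v} (hp : p.NonBacktracking) :
    p.reverse.NonBacktracking := by
  rw [nonBacktracking_iff_isChain, darts_reverse, List.isChain_reverse, List.isChain_map]
  exact hp.imp fun {_ _} hne h => hne (by rw [Dart.symm_symm] at h; exact h.symm)

lemma NonBacktracking.append {u v w : V} {p : G.Walk u v} {q : G.Walk v w}
    (hp : p.NonBacktracking) (hq : q.NonBacktracking)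
    (h : ¬p.Nil → ¬q.Nil → q.snd ≠ p.penultimate) : (p.append q).NonBacktracking := by
  rw [nonBacktracking_iff_isChain, darts_append, List.isChain_append]
  refine ⟨hp, hq, fun d₁ hd₁ d₂ hd₂ heq => ?_⟩
  have hp' : p.darts ≠ [] := by rintro hn; simp [hn] at hd₁
  have hq' : q.darts ≠ [] := by rintro hn; simp [hn] at hd₂
  rw [List.getLast?_eq_some_getLast hp', Option.mem_some_iff, getLast_darts_eq_lastDart] at hd₁
  rw [List.head?_eq_some_head hq', Option.mem_some_iff, head_darts_eq_firstDart] at hd₂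
  subst hd₁ hd₂
  exact h (darts_eq_nil.not.mp hp') (darts_eq_nil.not.mp hq') (congrArg (·.toProd.2) heq)

lemma IsPath.nonBacktracking {u v : V} {p : G.Walk u v} (hp : p.IsPath) : p.NonBacktracking := by
  induction p with
  | nil => exact List.isChain_nil
  | cons h p ih =>
    rw [cons_isPath_iff] at hp
    exact (nonBacktracking_cons_iff h p).2
      ⟨ih hp.1, fun _ hu => hp.2 (hu ▸ p.getVert_mem_support 1)⟩

lemma NonBacktracking.isPath_of_length_lt_egirth {u v : V} {p : G.Walk u v}
    (hp : p.NonBacktracking) (hlen : (p.length : ℕ∞) < G.egirth) : p.IsPath := by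
  classical
  induction p with
  | nil => exact .nil
  | cons h p ih =>
    rw [nonBacktracking_cons_iff] at hp
    rw [length_cons, Nat.cast_succ] at hlen
    have hpath : p.IsPath := ih hp.1 (le_self_add.trans_lt hlen)
    refine (cons_isPath_iff h p).2 ⟨hpath, fun hu => ?_⟩
    -- closing `p` up at its first return to `u` gives a cycle through the edge `uw`
    have hcycle : (cons h (p.takeUntil _ hu)).IsCycle := by
      refine (cons_isCycle_iff _ h).2 ⟨hpath.takeUntil hu, fun he => ?_⟩
      have hsnd := (hpath.takeUntil hu).eq_snd_of_mem_edges (Sym2.eq_swap ▸ he)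
      rw [snd_takeUntil h.ne] at hsnd
      exact hp.2 (fun hn => h.ne (by simpa [nil_iff_support_eq.1 hn] using hu)) hsnd.symm
    have hle := (egirth_le_length hcycle).trans_lt ((Nat.cast_le.2 ?_).trans_lt hlen)
    · exact hle.false
    · exact (length_cons _ _).trans_le (by grw [p.length_takeUntil_le_length hu])

lemma NonBacktracking.eq_of_length_add_lt_egirth {u v : V} {p q : G.Walk u v}
    (hp : p.NonBacktracking) (hq : q.NonBacktracking)
    (hlen : ((p.length + q.length : ℕ) : ℕ∞) < G.egirth) : p = q := by
  induction p with
  | nil =>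
    exact (isPath_iff_nil.1 (hq.isPath_of_length_lt_egirth (by simpa using hlen))).eq_nil.symm
  | @cons u x v ha p ih =>
    cases q with
    | nil => exact (isPath_iff_nil.1 (hp.isPath_of_length_lt_egirth (by simpa using hlen))).eq_nil
    | @cons _ y _ hb q =>
      by_cases hxy : x = y
      · subst hxy
        rw [ih ((nonBacktracking_cons_iff ha p).1 hp).1 ((nonBacktracking_cons_iff hb q).1 hq).1
          ((Nat.cast_le.2 (by simp only [length_cons]; omega)).trans_lt hlen)]
      · -- two different first steps: going back along `p` and out along `q` is a closed
        -- non-backtracking walk shorter than the girth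
        have hc := hp.reverse.append hq fun _ _ => by
          rw [penultimate_reverse, snd_cons, snd_cons]; exact Ne.symm hxy
        have := isPath_iff_nil.1 (hc.isPath_of_length_lt_egirth (by simpa using hlen))
        simpa using (length_eq_zero_iff.2 this)

lemma dist_getVert_of_length_eq_dist {u v : V} {p : G.Walk u v} (hp : p.length = G.dist u v)
    {i : ℕ} (hi : i ≤ p.length) : G.dist u (p.getVert i) = i := by
  rw [← length_eq_dist_of_subwalk hp (p.isSubwalk_take i), take_length, min_eq_left hi]

lemma nonBacktracking_concat_of_dist_le {v u z : V} {p : G.Walk v u}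
    (hp : p.length = G.dist v u) (h : G.Adj u z) (hz : G.dist v u ≤ G.dist v z) :
    (p.concat h).NonBacktracking := by
  rw [concat_eq_append]
  refine (p.isPath_of_length_eq_dist hp).nonBacktracking.append
    (SimpleGraph.Adj.isPath_toWalk h).nonBacktracking fun hnil _ hzp => ?_
  have hpen : G.dist v p.penultimate = p.length - 1 :=
    dist_getVert_of_length_eq_dist hp (by omega)
  have := not_nil_iff_lt_length.1 hnil
  rw [snd_cons] at hzp
  rw [hzp] at hz
  omega

lemma getVert_append_self_add {x : V} (c : G.Walk x x) {i : ℕ} (hi : i ≤ c.length) :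
    (c.append c).getVert (i + c.length) = (c.append c).getVert i := by
  rw [getVert_append, getVert_append', if_neg (by omega), if_pos hi, Nat.add_sub_cancel]

lemma dist_getVert_le {u v : V} (p : G.Walk u v) {i j : ℕ} (hij : i ≤ j) :
    G.dist (p.getVert i) (p.getVert j) ≤ j - i := by
  have := G.dist_le ((p.drop i).take (j - i))
  rw [take_length, drop_getVert, Nat.add_sub_cancel' hij] at this
  exact this.trans (min_le_left _ _)

lemma dist_le_of_isSubwalk_append_self {x a b : V} {c : G.Walk x x} {w : G.Walk a b}
    (hw : w.IsSubwalk (c.append c)) (hlen : w.length ≤ c.length) :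
    G.dist a b ≤ c.length - w.length := by
  obtain ⟨r₁, r₂, hc⟩ := hw
  have ha : (c.append c).getVert r₁.length = a := by
    rw [hc, getVert_append', if_pos (by simp), getVert_append, if_neg (by omega), Nat.sub_self,
      getVert_zero]
  have hb : (c.append c).getVert (r₁.length + w.length) = b := by
    rw [hc, getVert_append', if_pos (by simp), getVert_append, if_neg (by omega),
      Nat.add_sub_cancel_left, getVert_length]
  have htotal : r₁.length + w.length ≤ c.length + c.length := by
    have := congrArg length hc
    simp only [length_append] at this
    omega
  -- `a` recurs one period later and `b` one period earlier; the arc between them closes `w` up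
  rcases le_or_gt (r₁.length + w.length) c.length with h | h
  · have := (c.append c).dist_getVert_le (i := r₁.length + w.length)
      (j := r₁.length + c.length) (by omega)
    rw [getVert_append_self_add c (by omega), ha, hb, dist_comm] at this
    omega
  · have := (c.append c).dist_getVert_le (i := r₁.length + w.length - c.length)
      (j := r₁.length) (by omega)
    rw [← getVert_append_self_add c (by omega), Nat.sub_add_cancel h.le, ha, hb,
      dist_comm] at this
    omega

end Walk

lemma natCast_girth_eq_egirth (h : G.girth ≠ 0) : (G.girth : ℕ∞) = G.egirth :=
  ENat.natCast_toNat (egirth_eq_top.not.2 (girth_eq_zero.not.1 h))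

lemma Connected.exists_adj_dist_add_one_eq (hconn : G.Connected) {v u : V}
    (hu : 0 < G.dist v u) : ∃ w, G.Adj w u ∧ G.dist v w + 1 = G.dist v u := by
  obtain ⟨p, -, hp⟩ := hconn.exists_path_of_dist v u
  have hnil : ¬p.Nil := Walk.not_nil_iff_lt_length.2 (hp ▸ hu)
  refine ⟨p.penultimate, p.adj_penultimate hnil, ?_⟩
  rw [Walk.dist_getVert_of_length_eq_dist hp (by omega)]
  omega

lemma Connected.eq_of_adj_of_dist_add_one_eq (hconn : G.Connected) {v u w₁ w₂ : V}
    (h₁ : G.Adj w₁ u) (h₂ : G.Adj w₂ u) (hd₁ : G.dist v w₁ + 1 = G.dist v u)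
    (hd₂ : G.dist v w₂ + 1 = G.dist v u) (hg : ((2 * G.dist v u : ℕ) : ℕ∞) < G.egirth) :
    w₁ = w₂ := by
  obtain ⟨p₁, -, hp₁⟩ := hconn.exists_path_of_dist v w₁
  obtain ⟨p₂, -, hp₂⟩ := hconn.exists_path_of_dist v w₂
  have hq₁ := Walk.nonBacktracking_concat_of_dist_le hp₁ h₁ (by omega)
  have hq₂ := Walk.nonBacktracking_concat_of_dist_le hp₂ h₂ (by omega)
  have heq := hq₁.eq_of_length_add_lt_egirth hq₂
    (by simpa [hp₁, hp₂, two_mul, hd₁, hd₂] using hg)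
  simpa using congrArg Walk.penultimate heq

lemma Connected.dist_ne_of_adj (hconn : G.Connected) {v u w : V} (h : G.Adj u w)
    (hg : ((2 * G.dist v u + 1 : ℕ) : ℕ∞) < G.egirth) : G.dist v u ≠ G.dist v w := by
  intro heq
  obtain ⟨p, -, hp⟩ := hconn.exists_path_of_dist v u
  obtain ⟨q, hq, hql⟩ := hconn.exists_path_of_dist v w
  have := (Walk.nonBacktracking_concat_of_dist_le hp h heq.le).eq_of_length_add_lt_egirth
    hq.nonBacktracking (by convert hg using 2; rw [Walk.length_concat]; omega)
  have := congrArg Walk.length this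
  rw [Walk.length_concat] at this
  omega

lemma Connected.dist_le_of_forall_dist_ne (hconn : G.Connected) {v : V} {r : ℕ}
    (h : ∀ u, G.dist v u ≠ r + 1) (u : V) : G.dist v u ≤ r := by
  by_contra! hu
  obtain ⟨p, -, hp⟩ := hconn.exists_path_of_dist v u
  exact h _ (Walk.dist_getVert_of_length_eq_dist hp (by omega))

section Spheres

variable [Fintype V]

-- Vertices not reachable from `v` have `dist = 0`, so they land in `sphere v 0`.
noncomputable def sphere (G : SimpleGraph V) (v : V) (j : ℕ) : Finset V := {u | G.dist v u = j}

@[simp]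
lemma mem_sphere {v u : V} {j : ℕ} : u ∈ G.sphere v j ↔ G.dist v u = j := by
  simp [sphere]

lemma Connected.sphere_zero (hconn : G.Connected) (v : V) : G.sphere v 0 = {v} := by
  ext u
  simp [hconn.dist_eq_zero_iff, eq_comm]

lemma card_eq_sum_card_sphere {v : V} {r : ℕ} (h : ∀ u, G.dist v u ≤ r) :
    Fintype.card V = ∑ j ∈ range (r + 1), #(G.sphere v j) := by
  rw [← Finset.card_univ]
  exact card_eq_sum_card_fiberwise fun u _ => Finset.mem_range.2 (Nat.lt_succ_of_le (h u))

variable [DecidableRel G.Adj]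

lemma sphere_one (v : V) : G.sphere v 1 = G.neighborFinset v := by
  ext u
  simp

lemma card_sphere_mul_eq_card_sphere_mul {v : V} {i j a b : ℕ}
    (ha : ∀ u ∈ G.sphere v i, #{w ∈ G.neighborFinset u | G.dist v w = j} = a)
    (hb : ∀ w ∈ G.sphere v j, #{u ∈ G.neighborFinset w | G.dist v u = i} = b) :
    #(G.sphere v i) * a = #(G.sphere v j) * b := by
  refine card_mul_eq_card_mul G.Adj (fun u hu => ?_) (fun w hw => ?_)
  · rw [← ha u hu]
    congr 1
    ext w
    simp [bipartiteAbove, and_comm]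
  · rw [← hb w hw]
    congr 1
    ext u
    simp [bipartiteBelow, and_comm, adj_comm]

lemma Connected.card_closer_neighbors (hconn : G.Connected) {v u : V} {j : ℕ}
    (hu : G.dist v u = j + 1) (hg : ((2 * (j + 1) : ℕ) : ℕ∞) < G.egirth) :
    #{w ∈ G.neighborFinset u | G.dist v w = j} = 1 := by
  obtain ⟨w, hw, hwd⟩ := hconn.exists_adj_dist_add_one_eq (v := v) (u := u) (by omega)
  refine card_eq_one.2 ⟨w, ext fun x => ?_⟩
  simp only [Finset.mem_filter, mem_neighborFinset, Finset.mem_singleton]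
  refine ⟨fun ⟨hx, hxd⟩ => hconn.eq_of_adj_of_dist_add_one_eq hx.symm hw (by omega) hwd
    (hu ▸ hg), ?_⟩
  rintro rfl
  exact ⟨hw.symm, by omega⟩

lemma Connected.card_farther_neighbors (hconn : G.Connected) {v u : V} {j : ℕ}
    (hu : G.dist v u = j + 1) (hg : ((2 * (j + 1) + 1 : ℕ) : ℕ∞) < G.egirth) :
    #{w ∈ G.neighborFinset u | G.dist v w = j + 2} = G.degree u - 1 := by
  have hnot_farther : {w ∈ G.neighborFinset u | ¬G.dist v w = j + 2} =
      {w ∈ G.neighborFinset u | G.dist v w = j} := by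
    refine filter_congr fun w hw => ?_
    have hadj := (mem_neighborFinset _ _ _).1 hw
    have hne := hconn.dist_ne_of_adj (v := v) hadj (hu ▸ hg)
    rcases hadj.diff_dist_adj (u := v) with h | h | h <;> omega
  have hsplit := card_filter_add_card_filter_not (s := G.neighborFinset u)
    (fun w => G.dist v w = j + 2)
  rw [hnot_farther, hconn.card_closer_neighbors hu ((Nat.cast_le.2 (by omega)).trans_lt hg),
    card_neighborFinset_eq_degree] at hsplit
  omega

lemma Connected.card_sphere_succ (hconn : G.Connected) {d : ℕ} (hreg : G.IsRegularOfDegree d)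
    (v : V) {j : ℕ} (hg : ((2 * (j + 1) : ℕ) : ℕ∞) < G.egirth) :
    #(G.sphere v (j + 1)) = d * (d - 1) ^ j := by
  induction j with
  | zero => simp [sphere_one, card_neighborFinset_eq_degree, hreg v]
  | succ j ih =>
    have hdc := card_sphere_mul_eq_card_sphere_mul (G := G) (v := v) (b := 1)
      (fun u hu => (hconn.card_farther_neighbors (mem_sphere.1 hu)
        ((Nat.cast_le.2 (by omega)).trans_lt hg)).trans (congrArg (· - 1) (hreg u)))
      (fun w hw => hconn.card_closer_neighbors (mem_sphere.1 hw) hg)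
    rw [ih ((Nat.cast_le.2 (by omega)).trans_lt hg)] at hdc
    rw [← mul_one #_, ← hdc]
    ring

lemma Connected.card_eq_one_add_mul_geom_sum (hconn : G.Connected) {d : ℕ}
    (hreg : G.IsRegularOfDegree d) {v : V} {R : ℕ} (hdiam : ∀ u, G.dist v u ≤ R)
    (hg : ((2 * R : ℕ) : ℕ∞) < G.egirth) :
    Fintype.card V = 1 + d * ∑ j ∈ range R, (d - 1) ^ j := by
  rw [card_eq_sum_card_sphere hdiam, Finset.sum_range_succ', hconn.sphere_zero, card_singleton,
    Finset.mul_sum, add_comm]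
  refine congrArg (1 + ·) (sum_congr rfl fun j hj => hconn.card_sphere_succ hreg v ?_)
  exact (Nat.cast_le.2 (by have := Finset.mem_range.1 hj; omega)).trans_lt hg

lemma Connected.card_eq_two_mul_geom_sum (hconn : G.Connected) {d : ℕ} (hd : 0 < d)
    (hreg : G.IsRegularOfDegree d) {v : V} {R : ℕ} (hR : 2 ≤ R)
    (hdiam : ∀ u, G.dist v u ≤ R)
    (hflat : ∀ u w, G.Adj u w → G.dist v u = R → G.dist v w ≠ R)
    (hg : ((2 * R : ℕ) : ℕ∞) ≤ G.egirth) :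
    Fintype.card V = 2 * ∑ j ∈ range R, (d - 1) ^ j := by
  obtain ⟨k, rfl⟩ : ∃ k, R = k + 2 := ⟨R - 2, by omega⟩
  have hinner : ∀ j ≤ k, #(G.sphere v (j + 1)) = d * (d - 1) ^ j := fun j hj =>
    hconn.card_sphere_succ hreg v ((Nat.cast_lt.2 (by omega)).trans_le hg)
  -- the outermost sphere is an independent set, so all edges from it go one level down
  have hdown :
      ∀ w ∈ G.sphere v (k + 2), #{u ∈ G.neighborFinset w | G.dist v u = k + 1} = d := by
    intro w hw
    rw [filter_true_of_mem, card_neighborFinset_eq_degree, hreg w]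
    intro x hx
    have hadj := (mem_neighborFinset _ _ _).1 hx
    have := hflat w x hadj (mem_sphere.1 hw)
    have := hdiam x
    rcases hadj.diff_dist_adj (u := v) with h | h | h <;> simp only [mem_sphere] at hw <;> omega
  have hdc := card_sphere_mul_eq_card_sphere_mul
    (fun u hu => (hconn.card_farther_neighbors (mem_sphere.1 hu)
      ((Nat.cast_lt.2 (by omega)).trans_le hg)).trans (congrArg (· - 1) (hreg u))) hdown
  have htop : #(G.sphere v (k + 2)) = (d - 1) ^ (k + 1) := by
    refine Nat.eq_of_mul_eq_mul_left hd ?_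
    rw [mul_comm, ← hdc, hinner k le_rfl]
    ring
  rw [card_eq_sum_card_sphere hdiam, Finset.sum_range_succ, Finset.sum_range_succ', htop,
    hconn.sphere_zero, card_singleton,
    sum_congr rfl fun j hj => hinner j (by have := Finset.mem_range.1 hj; omega)]
  obtain ⟨e, rfl⟩ : ∃ e, d = e + 1 := ⟨d - 1, by omega⟩
  simpa [add_comm 1, Finset.mul_sum] using one_add_succ_mul_geom_sum_add_pow e (k + 1)

end Spheres

end SimpleGraph

lemma ContainedInClosedGeodesic.pos {V : Type*} {G : SimpleGraph V} {a b : V} {w : G.Walk a b}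
    {g : ℕ} (h : ContainedInClosedGeodesic G w g) : 0 < g := by
  obtain ⟨x, c, ⟨hne, -⟩, rfl, -⟩ := h
  rw [← Walk.length_darts]
  exact List.length_pos_of_ne_nil hne

lemma ContainedInClosedGeodesic.dist_le {V : Type*} {G : SimpleGraph V} {a b : V}
    {w : G.Walk a b} {g : ℕ} (h : ContainedInClosedGeodesic G w g) (hlen : w.length ≤ g) :
    G.dist a b ≤ g - w.length := by
  obtain ⟨x, c, -, rfl, hc⟩ := h
  by_cases hnil : w.Nil
  · simp [hnil.eq]
  · rw [← Walk.darts_append, ← Walk.isSubwalk_iff_darts_isInfix hnil] at hc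
    exact Walk.dist_le_of_isSubwalk_append_self hc hlen

/-- A connected `d`-regular graph (`d ≥ 3`) of girth `g` in which every
non-backtracking walk of length `⌊g/2⌋ + 1` extends to a closed geodesic of
length `g` attains the Moore bound, i.e. it is a Moore graph. -/
theorem moore_of_every_walk_extends {V : Type*} [Fintype V] (G : SimpleGraph V)
    [DecidableRel G.Adj]
    (n d g : ℕ) (hd : 3 ≤ d) (hreg : G.IsRegularOfDegree d) (hconn : G.Connected)
    (hg : G.girth = g) (hn : Fintype.card V = n)
    (hext : ∀ (a b : V) (w : G.Walk a b), w.NonBacktracking → w.length = g / 2 + 1 →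
      ContainedInClosedGeodesic G w g) :
    (Odd g → n = 1 + d * ∑ j ∈ range ((g - 3) / 2 + 1), (d - 1) ^ j) ∧
    (Even g → n = 2 * ∑ j ∈ range ((g - 2) / 2 + 1), (d - 1) ^ j) := by
  subst hn
  obtain ⟨v⟩ := hconn.nonempty
  have hg_pos : 0 < g := by
    obtain ⟨y, hy⟩ := (G.degree_pos_iff_exists_adj v).1 (by rw [hreg v]; omega : 0 < G.degree v)
    refine Nat.pos_of_ne_zero fun hg0 => ?_
    exact (hext v y hy.toWalk hy.isPath_toWalk.nonBacktracking (by simp [hg0])).pos.ne' hg0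
  have hegirth : G.egirth = g := hg ▸ (G.natCast_girth_eq_egirth (by omega)).symm
  have hg3 : 3 ≤ g := by exact_mod_cast hegirth ▸ G.three_le_egirth
  have hshort : ∀ a b (w : G.Walk a b), w.NonBacktracking → w.length = g / 2 + 1 →
      G.dist a b + (g / 2 + 1) ≤ g := fun a b w hw hlen => by
    have := (hext a b w hw hlen).dist_le (by omega)
    omega
  have hdiam : ∀ u, G.dist v u ≤ g / 2 := hconn.dist_le_of_forall_dist_ne fun u hu => by
    obtain ⟨p, hp, hlen⟩ := hconn.exists_path_of_dist v u
    have := hshort v u p hp.nonBacktracking (hlen.trans hu)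
    omega
  refine ⟨fun ⟨R, hR⟩ => ?_, fun ⟨R, hR⟩ => ?_⟩
  · subst hR
    rw [show (2 * R + 1 - 3) / 2 + 1 = R by omega]
    exact hconn.card_eq_one_add_mul_geom_sum hreg (fun u => (hdiam u).trans (by omega))
      (by rw [hegirth]; exact_mod_cast (by omega : 2 * R < 2 * R + 1))
  · subst hR
    have hflat : ∀ u w, G.Adj u w → G.dist v u = R → G.dist v w ≠ R := fun u w h hu hw => by
      obtain ⟨p, -, hp⟩ := hconn.exists_path_of_dist v u
      have := hshort v w (p.concat h) (Walk.nonBacktracking_concat_of_dist_le hp h (by omega))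
        (by rw [Walk.length_concat]; omega)
      omega
    rw [show (R + R - 2) / 2 + 1 = R by omega]
    exact hconn.card_eq_two_mul_geom_sum (by omega) hreg (by omega)
      (fun u => (hdiam u).trans (by omega)) hflat (by rw [hegirth, two_mul])
end

section
/- In a graph of girth g on n vertices with minimal degree d and depth δ ≥ 1, the kissing number satisfies kiss(G) ≥ n·d·(d-1)^(δ-1) / g. -/
open SimpleGraph List

/-- Shortest oriented cycles equipped with a starting point. -/
noncomputable def rootedShortestCycles {V : Type*} (G : SimpleGraph V) (g : ℕ) : ℕ :=
  {p : (v : V) × G.Walk v v | p.2.IsCycle ∧ p.2.length = g}.ncard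

/-- The kissing number: shortest oriented cycles up to cyclic rotation. -/
noncomputable def kissingNumber {V : Type*} (G : SimpleGraph V) (g : ℕ) : ℕ :=
  rootedShortestCycles G g / g


/-!
Every non-backtracking walk of length `δ` lies in a closed geodesic of length `g = girth`, and a
closed non-backtracking walk of length at most the girth is a cycle. Rotating that cycle so that
it starts where the walk starts makes the walk a prefix of the doubled dart list of a rooted
shortest cycle; as the walk is recovered from that prefix, distinct walks get distinct rooted
shortest cycles. There are at least `n d (d - 1)^(δ - 1)` non-backtracking walks of length `δ`,
and the rooted shortest cycles fall into rotation classes of exactly `g` elements each, so the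
division by `g` in the kissing number is exact.
-/
namespace SimpleGraph.Walk

variable {V : Type*} {G : SimpleGraph V}

theorem nonBacktracking_iff {u v : V} (w : G.Walk u v) :
    w.NonBacktracking ↔ w.darts.IsChain (fun d₁ d₂ => d₂ ≠ d₁.symm) :=
  Iff.rfl

theorem NonBacktracking.of_isSubwalk {u v u' v' : V} {w : G.Walk u v} {w' : G.Walk u' v'}
    (hw : w.NonBacktracking) (h : w'.IsSubwalk w) : w'.NonBacktracking :=
  (nonBacktracking_iff w').mpr (((nonBacktracking_iff w).mp hw).infix h.darts_isInfix)

theorem exists_isSubwalk_of_not_isPath [DecidableEq V] {u v : V} {p : G.Walk u v}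
    (hp : ¬ p.IsPath) : ∃ (x : V) (c : G.Walk x x), ¬ c.Nil ∧ c.IsSubwalk p := by
  induction p with
  | nil => exact (hp IsPath.nil).elim
  | @cons u x _ h q ih =>
    by_cases hq : q.IsPath
    · have hu : u ∈ q.support := by simpa [cons_isPath_iff, hq] using hp
      refine ⟨u, cons h (q.takeUntil u hu), not_nil_cons,
        isSubwalk_of_append_left (p₂ := q.dropUntil u hu) ?_⟩
      rw [cons_append, take_spec]
    · obtain ⟨x, c, hc, hsub⟩ := ih hq
      exact ⟨x, c, hc, hsub.trans (q.isSubwalk_cons h)⟩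

theorem NonBacktracking.isCycle_or_exists_isCycle_length_lt {v : V} {w : G.Walk v v}
    (hw : w.NonBacktracking) (hne : ¬ w.Nil) :
    w.IsCycle ∨ ∃ (u : V) (c : G.Walk u u), c.IsCycle ∧ c.length < w.length := by
  classical
  induction hL : w.length using Nat.strong_induction_on generalizing v with
  | _ L ih =>
  cases w with
  | nil => exact (hne nil_nil).elim
  | @cons _ u _ h p =>
    by_cases hp : p.IsPath
    · by_cases he : s(v, u) ∈ p.edges
      · -- `w` is then `v → u → v`, which backtracks
        rw [hp.eq_adj_toWalk_of_mem_edges (Sym2.eq_swap ▸ he)] at hw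
        exact absurd ((nonBacktracking_iff _).mp hw) (by simp [Dart.symm])
      · exact .inl ((cons_isCycle_iff p h).mpr ⟨hp, he⟩)
    · obtain ⟨x, c, hc, hsub⟩ := exists_isSubwalk_of_not_isPath hp
      have hlt : c.length < L := by
        have := length_le_of_isSubwalk hsub
        simp only [length_cons] at hL
        omega
      refine .inr ?_
      rcases ih c.length hlt (hw.of_isSubwalk (hsub.trans (p.isSubwalk_cons h))) hc rfl with
        hcyc | ⟨y, c', hc', hlt'⟩
      · exact ⟨x, c, hcyc, hlt⟩
      · exact ⟨y, c', hc', hlt'.trans hlt⟩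

theorem NonBacktracking.isCycle_of_length_le_girth {v : V} {w : G.Walk v v}
    (hw : w.NonBacktracking) (hne : ¬ w.Nil) (hlen : w.length ≤ G.girth) : w.IsCycle := by
  refine (hw.isCycle_or_exists_isCycle_length_lt hne).resolve_right ?_
  rintro ⟨u, c, hc, hlt⟩
  have := G.girth_le_length hc
  omega

theorem IsCycle.exists_darts_eq_rotate_one {v : V} {c : G.Walk v v} (hc : c.IsCycle) :
    ∃ (u : V) (c' : G.Walk u u), c'.IsCycle ∧ c'.darts = c.darts.rotate 1 := by
  classical
  cases c with
  | nil => exact (hc.not_nil nil_nil).elim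
  | @cons _ u _ h p =>
    have hu : u ∈ (cons h p).support := by simp
    refine ⟨u, _, hc.rotate hu, ?_⟩
    simp [rotate, takeUntil, dropUntil, h.ne]

theorem injOn_darts :
    Set.InjOn (fun p : (v : V) × G.Walk v v => p.2.darts) {p | ¬ p.2.Nil} := by
  rintro ⟨u, p⟩ hp ⟨v, q⟩ - h
  cases p with
  | nil => exact (hp nil_nil).elim
  | cons hu p =>
    cases q with
    | nil => simp at h
    | cons hv q =>
      obtain ⟨hd, -⟩ := List.cons_eq_cons.mp h
      obtain rfl : u = v := congrArg (·.fst) hd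
      rw [darts_injective (show (cons hu p).darts = (cons hv q).darts from h)]

end SimpleGraph.Walk

namespace List

variable {α : Type*}

theorem dvd_ncard_of_forall_rotate_mem {S : Set (List α)} {g : ℕ} (hS : S.Finite) (hg : 0 < g)
    (hnodup : ∀ l ∈ S, l.Nodup) (hlen : ∀ l ∈ S, l.length = g)
    (hrot : ∀ l ∈ S, ∀ k, l.rotate k ∈ S) : g ∣ S.ncard := by
  classical
  obtain ⟨S, rfl⟩ := hS.exists_finset_coe
  rw [Set.ncard_coe_finset, Finset.card_eq_sum_card_image (fun l : List α => (l : Cycle α))]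
  refine Finset.dvd_sum fun c hc => ?_
  obtain ⟨l, hl, rfl⟩ := Finset.mem_image.mp hc
  have hfiber : S.filter (fun l' : List α => (l' : Cycle α) = (l : Cycle α)) =
      l.cyclicPermutations.toFinset := by
    ext l'
    simp only [Finset.mem_filter, mem_toFinset, mem_cyclicPermutations_iff, Cycle.coe_eq_coe]
    refine ⟨And.right, fun h => ⟨?_, h⟩⟩
    obtain ⟨k, rfl⟩ := h.symm
    exact hrot l hl k
  have hne : l ≠ [] := ne_nil_of_length_pos (hlen l hl ▸ hg)
  rw [hfiber, toFinset_card_of_nodup (hnodup l hl).cyclicPermutations,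
    length_cyclicPermutations_of_ne_nil l hne, hlen l hl]

theorem drop_append_self_prefix_rotate (l : List α) (i : ℕ) :
    (l ++ l).drop i <+: l.rotate i ++ l.rotate i := by
  rcases le_or_gt i l.length with hi | hi
  · rw [drop_append_of_le_length hi, rotate_eq_drop_append_take hi, append_assoc,
      ← append_assoc (l.take i), take_append_drop, ← append_assoc]
    exact prefix_append _ _
  · obtain ⟨j, rfl⟩ := Nat.exists_eq_add_of_lt hi
    rw [drop_append, drop_eq_nil_of_le hi.le, nil_append, Nat.add_assoc, Nat.add_sub_cancel_left,
      ← rotate_rotate, rotate_length]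
    rcases le_or_gt (j + 1) l.length with hj | hj
    · rw [rotate_eq_drop_append_take hj, append_assoc]
      exact prefix_append _ _
    · rw [drop_eq_nil_of_le hj.le]
      exact nil_prefix

theorem IsInfix.exists_prefix_rotate_append_self {x l : List α} (h : x <:+: l ++ l) :
    ∃ k, x <+: l.rotate k ++ l.rotate k := by
  obtain ⟨s, t, h⟩ := h
  refine ⟨s.length, (prefix_append x t).trans ?_⟩
  rw [← drop_left (l₁ := s) (l₂ := x ++ t), ← append_assoc, h]
  exact drop_append_self_prefix_rotate l s.length

end List

namespace SimpleGraph

variable {V : Type*} (G : SimpleGraph V)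

def cycleDartLists (g : ℕ) : Set (List G.Dart) :=
  (fun p : (v : V) × G.Walk v v => p.2.darts) '' {p | p.2.IsCycle ∧ p.2.length = g}

variable {G}

theorem Walk.IsCycle.darts_mem_cycleDartLists {v : V} {c : G.Walk v v} (hc : c.IsCycle) :
    c.darts ∈ G.cycleDartLists c.length :=
  ⟨⟨v, c⟩, ⟨hc, rfl⟩, rfl⟩

theorem rootedShortestCycles_eq_ncard_cycleDartLists (g : ℕ) :
    rootedShortestCycles G g = (G.cycleDartLists g).ncard :=
  (Walk.injOn_darts.mono fun _ hp => hp.1.not_nil).ncard_image.symm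

theorem length_of_mem_cycleDartLists {g : ℕ} {l : List G.Dart} (hl : l ∈ G.cycleDartLists g) :
    l.length = g := by
  obtain ⟨⟨v, c⟩, ⟨-, hlen⟩, rfl⟩ := hl
  simpa using hlen

theorem nodup_of_mem_cycleDartLists {g : ℕ} {l : List G.Dart} (hl : l ∈ G.cycleDartLists g) :
    l.Nodup := by
  obtain ⟨⟨v, c⟩, ⟨hc, -⟩, rfl⟩ := hl
  exact List.Nodup.of_map _ (c.edges_eq_map_darts ▸ hc.isCircuit.isTrail.edges_nodup)

theorem rotate_mem_cycleDartLists {g : ℕ} {l : List G.Dart} (hl : l ∈ G.cycleDartLists g)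
    (k : ℕ) : l.rotate k ∈ G.cycleDartLists g := by
  induction k with
  | zero => simpa using hl
  | succ k ih =>
    obtain ⟨⟨v, c⟩, ⟨hc, hlen⟩, hck⟩ := ih
    obtain ⟨u, c', hc', hdarts⟩ := hc.exists_darts_eq_rotate_one
    have hlen' : c'.length = g := by
      rw [← hlen, ← c'.length_darts, hdarts, List.length_rotate, c.length_darts]
    rw [← List.rotate_rotate, ← hck, ← hdarts]
    exact hlen' ▸ hc'.darts_mem_cycleDartLists

theorem finite_cycleDartLists [Finite V] (g : ℕ) : (G.cycleDartLists g).Finite :=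
  have : Finite G.Dart := .of_injective _ Dart.toProd_injective
  (List.finite_length_eq G.Dart g).subset fun _ => length_of_mem_cycleDartLists

theorem dvd_rootedShortestCycles [Finite V] {g : ℕ} (hg : 0 < g) :
    g ∣ rootedShortestCycles G g := by
  rw [rootedShortestCycles_eq_ncard_cycleDartLists]
  exact List.dvd_ncard_of_forall_rotate_mem (finite_cycleDartLists g) hg
    (fun _ => nodup_of_mem_cycleDartLists) (fun _ => length_of_mem_cycleDartLists)
    (fun _ => rotate_mem_cycleDartLists)

section NonBacktrackingDarts

open Finset

variable [Fintype V] [DecidableRel G.Adj]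

variable (G) in
open Classical in
noncomputable def nonBacktrackingDarts (k : ℕ) : Finset (List.Vector G.Dart k) :=
  {x | x.toList.IsChain fun d₁ d₂ => G.DartAdj d₁ d₂ ∧ d₂ ≠ d₁.symm}

theorem mem_nonBacktrackingDarts {k : ℕ} {x : List.Vector G.Dart k} :
    x ∈ G.nonBacktrackingDarts k ↔
      x.toList.IsChain fun d₁ d₂ => G.DartAdj d₁ d₂ ∧ d₂ ≠ d₁.symm := by
  simp [nonBacktrackingDarts]

theorem card_mul_minDegree_le_card_nonBacktrackingDarts_one :
    Fintype.card V * G.minDegree ≤ #(G.nonBacktrackingDarts 1) := by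
  have huniv : G.nonBacktrackingDarts 1 = Finset.univ := by
    ext x
    simp [mem_nonBacktrackingDarts]
  rw [huniv, card_univ, card_vector, pow_one, dart_card_eq_sum_degrees]
  simpa using card_nsmul_le_sum univ (fun v => G.degree v) _ fun v _ => G.minDegree_le_degree v

theorem minDegree_sub_one_mul_card_nonBacktrackingDarts_le [DecidableEq V] (k : ℕ) :
    (G.minDegree - 1) * #(G.nonBacktrackingDarts (k + 1)) ≤
      #(G.nonBacktrackingDarts (k + 2)) := by
  -- extend `y` at the front by `d.symm`, for each dart `d ≠ y.head` leaving the start of `y`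
  let F : List.Vector G.Dart (k + 1) → Finset G.Dart := fun y =>
    Finset.erase {d : G.Dart | d.fst = y.head.fst} y.head
  have hF : ∀ y, G.minDegree - 1 ≤ #(F y) := fun y => by
    rw [Finset.card_erase_of_mem (by simp), dart_fst_fiber_card_eq_degree]
    exact Nat.sub_le_sub_right (G.minDegree_le_degree _) 1
  have hmaps : ∀ p ∈ (G.nonBacktrackingDarts (k + 1)).sigma F,
      p.2.symm ::ᵥ p.1 ∈ G.nonBacktrackingDarts (k + 2) := by
    rintro ⟨y, d⟩ hp
    obtain ⟨hy, hd⟩ := Finset.mem_sigma.mp hp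
    simp only [F, mem_erase, Finset.mem_filter, mem_univ, true_and] at hd
    obtain ⟨hne, hfst⟩ := hd
    rw [mem_nonBacktrackingDarts] at hy ⊢
    rw [← List.Vector.cons_head_tail y] at hy ⊢
    simp only [List.Vector.toList_cons] at hy ⊢
    refine List.IsChain.cons_cons ⟨?_, ?_⟩ hy
    · simpa [DartAdj] using hfst
    · simpa using hne.symm
  have hinj : Set.InjOn (fun p : (_ : List.Vector G.Dart (k + 1)) × G.Dart => p.2.symm ::ᵥ p.1)
      ((G.nonBacktrackingDarts (k + 1)).sigma F) := by
    rintro ⟨y, d⟩ - ⟨y', d'⟩ - h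
    obtain ⟨hd, hy⟩ := List.cons_eq_cons.mp (congrArg List.Vector.toList h :)
    obtain rfl : d = d' := Dart.symm_involutive.injective hd
    obtain rfl : y = y' := List.Vector.eq _ _ hy
    rfl
  calc (G.minDegree - 1) * #(G.nonBacktrackingDarts (k + 1))
      = ∑ _y ∈ G.nonBacktrackingDarts (k + 1), (G.minDegree - 1) := by simp [Nat.mul_comm]
    _ ≤ ∑ y ∈ G.nonBacktrackingDarts (k + 1), #(F y) := Finset.sum_le_sum fun y _ => hF y
    _ = #((G.nonBacktrackingDarts (k + 1)).sigma F) := (Finset.card_sigma _ _).symm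
    _ ≤ #(G.nonBacktrackingDarts (k + 2)) := Finset.card_le_card_of_injOn _ hmaps hinj

theorem card_mul_minDegree_mul_pow_le_card_nonBacktrackingDarts [DecidableEq V] (k : ℕ) :
    Fintype.card V * G.minDegree * (G.minDegree - 1) ^ k ≤ #(G.nonBacktrackingDarts (k + 1)) := by
  induction k with
  | zero => simpa using card_mul_minDegree_le_card_nonBacktrackingDarts_one
  | succ k ih =>
    calc Fintype.card V * G.minDegree * (G.minDegree - 1) ^ (k + 1)
        = (G.minDegree - 1) * (Fintype.card V * G.minDegree * (G.minDegree - 1) ^ k) := by ring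
      _ ≤ (G.minDegree - 1) * #(G.nonBacktrackingDarts (k + 1)) := Nat.mul_le_mul_left _ ih
      _ ≤ #(G.nonBacktrackingDarts (k + 2)) :=
        minDegree_sub_one_mul_card_nonBacktrackingDarts_le k

theorem card_nonBacktrackingDarts_le_rootedShortestCycles (k : ℕ)
    (hdepth : ∀ (a b : V) (w : G.Walk a b), w.NonBacktracking → w.length = k + 1 →
      ContainedInClosedGeodesic G w G.girth) :
    #(G.nonBacktrackingDarts (k + 1)) ≤ rootedShortestCycles G G.girth := by
  have hprefix : ∀ x ∈ G.nonBacktrackingDarts (k + 1),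
      ∃ r ∈ G.cycleDartLists G.girth, x.toList <+: r ++ r := by
    intro x hx
    have hchain := mem_nonBacktrackingDarts.mp hx
    have hne : x.toList ≠ [] := List.ne_nil_of_length_pos (by simp)
    let w := Walk.ofDarts x.toList hne (hchain.imp fun _ _ h => h.1)
    have hw : w.darts = x.toList := Walk.darts_ofDarts _ _
    have hnb : w.NonBacktracking := by
      rw [Walk.nonBacktracking_iff, hw]
      exact hchain.imp fun _ _ h => h.2
    obtain ⟨v, c, ⟨hcne, hcnb, -⟩, hclen, hinfix⟩ :=
      hdepth _ _ w hnb (by simp [w])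
    have hc : c.IsCycle :=
      Walk.NonBacktracking.isCycle_of_length_le_girth hcnb (Walk.darts_eq_nil.not.mp hcne)
        hclen.le
    obtain ⟨j, hj⟩ := hinfix.exists_prefix_rotate_append_self
    exact ⟨_, rotate_mem_cycleDartLists (hclen ▸ hc.darts_mem_cycleDartLists) j, hw ▸ hj⟩
  choose! r hr hxr using hprefix
  rw [rootedShortestCycles_eq_ncard_cycleDartLists, ← Set.ncard_coe_finset]
  refine Set.ncard_le_ncard_of_injOn r hr (fun x hx y hy hxy => ?_) (finite_cycleDartLists _)
  apply List.Vector.eq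
  rw [List.prefix_iff_eq_take.mp (hxr x hx), List.prefix_iff_eq_take.mp (hxr y hy), hxy,
    x.toList_length, y.toList_length]

end NonBacktrackingDarts

end SimpleGraph

theorem kissing_number_ge_of_depth_general {V : Type*} [Fintype V] (G : SimpleGraph V)
    [DecidableRel G.Adj] (n d g δ : ℕ) (hδ : 1 ≤ δ)
    (hg : G.girth = g) (hmin : G.minDegree = d) (hn : Fintype.card V = n)
    (hdepth : ∀ (a b : V) (w : G.Walk a b), w.NonBacktracking → w.length = δ →
      ContainedInClosedGeodesic G w g) :
    (kissingNumber G g : ℝ) ≥ n * d * ((d : ℝ) - 1) ^ (δ - 1) / g := by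
  classical
  subst hg hmin hn
  obtain ⟨k, rfl⟩ := Nat.exists_eq_add_of_le' hδ
  rcases Nat.eq_zero_or_pos G.girth with hg0 | hg0
  · simp [hg0]
  have hcount : Fintype.card V * G.minDegree * (G.minDegree - 1) ^ k ≤
      rootedShortestCycles G G.girth :=
    (card_mul_minDegree_mul_pow_le_card_nonBacktrackingDarts k).trans
      (card_nonBacktrackingDarts_le_rootedShortestCycles k hdepth)
  rw [kissingNumber, Nat.cast_div (dvd_rootedShortestCycles hg0) (by positivity),
    Nat.add_sub_cancel, ge_iff_le]
  gcongr
  rcases Nat.eq_zero_or_pos G.minDegree with hd0 | hd0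
  · simp [hd0]
  · rw [← Nat.cast_one, ← Nat.cast_sub hd0]
    exact_mod_cast hcount

/-- If `G` is a connected graph of girth `g` on `n` vertices with minimal degree
`d` and depth `δ ≥ 1` (every non-backtracking walk of length `δ` is contained in
a shortest closed geodesic), then `kiss(G) ≥ n·d·(d-1)^(δ-1)/g`. -/
theorem kissing_number_ge_of_depth {V : Type*} [Fintype V] (G : SimpleGraph V)
    [DecidableRel G.Adj] (n d g δ : ℕ) (hδ : 1 ≤ δ) (hconn : G.Connected)
    (hg : G.girth = g) (hmin : G.minDegree = d) (hn : Fintype.card V = n)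
    (hdepth : ∀ (a b : V) (w : G.Walk a b), w.NonBacktracking → w.length = δ →
      ContainedInClosedGeodesic G w g) :
    (kissingNumber G g : ℝ) ≥ n * d * ((d : ℝ) - 1) ^ (δ - 1) / g :=
  kissing_number_ge_of_depth_general G n d g δ hδ hg hmin hn hdepth
end
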